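/- If j ∈ {3,...,n+1} is the label of the BoT leaf erased from a labeled binary tree of size n producing a labeled tree t' of size n−1, then there are exactly 4 positions in t' (relabeled increasingly by {1,...,n+1}\{j}) at which grafting a new leaf with label j recovers a tree whose best-of-three erasure is t' with BoT leaf labeled j: namely, the left and right of each of the two leaves v, v' of smallest labels sitting above the last active vertex at which fewer than three labels in {1,...,j−1} lie above. -/

import Mathlib

/-- A plane binary tree whose non-root leaves carry natural-number labels.
The root leaf (always labeled 0) is left implicit: an `LTree` is the part of
the tree above the unique edge incident to the root. -/
inductive LTree where
  | leaf : ℕ → LTree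
  | node : LTree → LTree → LTree
deriving DecidableEq

namespace LTree

/-- The size: number of branching (degree-3) nodes. -/
def size : LTree → ℕ
  | leaf _ => 0
  | node l r => size l + size r + 1

/-- The list of labels of the (non-root) leaves, left to right. -/
def labs : LTree → List ℕ
  | leaf a => [a]
  | node l r => labs l ++ labs r

/-- `t` is a labeled binary tree of size `n`: it has `n` branching nodes and its
`n+1` non-root leaves are bijectively labeled by `{1,…,n+1}` (the root leaf gets 0). -/
def IsLab (n : ℕ) (t : LTree) : Prop :=
  size t = n ∧ List.Perm (labs t) ((List.range (n + 1)).map (· + 1))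

/-- Number of elements of `L` strictly smaller than `x`. -/
def rank (L : List ℕ) (x : ℕ) : ℕ := L.countP (fun y => decide (y < x))

/-- Best-of-three comparison at a branching node with children `l`, `r`:
`true` iff at least two of the three minimally-labeled leaves of the fringe set
lie in the left child `l`. -/
def goLeft (l r : LTree) : Bool :=
  decide (2 ≤ (labs l).countP (fun x => decide (rank (labs l ++ labs r) x < 3)))

/-- The branching node selected by the best-of-three procedure (returned as the
fringe subtree rooted at it). -/
def botSel : LTree → LTree
  | leaf a => leaf a
  | node (leaf a) (leaf b) => node (leaf a) (leaf b)
  | node l r => if goLeft l r then botSel l else botSel r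

/-- The number of moves performed by the best-of-three selection. -/
def botDepth : LTree → ℕ
  | leaf _ => 0
  | node (leaf _) (leaf _) => 0
  | node l r => (if goLeft l r then botDepth l else botDepth r) + 1

/-- The position (sequence of left/right moves, `false` = left) of the selected node. -/
def botPos : LTree → List Bool
  | leaf _ => []
  | node (leaf _) (leaf _) => []
  | node l r => if goLeft l r then false :: botPos l else true :: botPos r

/-- Cut at the selected node: the two sibling leaves above it are removed, the
node becomes a leaf carrying the smaller label; returns the cut tree together
with the erased (BoT) label, i.e. the larger of the two. -/
def botCut : LTree → LTree × ℕ
  | leaf a => (leaf a, 0)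
  | node (leaf a) (leaf b) => (leaf (min a b), max a b)
  | node l r =>
    if goLeft l r then (node (botCut l).1 r, (botCut l).2)
    else (node l (botCut r).1, (botCut r).2)

/-- Relabel increasingly after erasing label `j`. -/
def relabel (j : ℕ) : LTree → LTree
  | leaf a => leaf (if a < j then a else a - 1)
  | node l r => node (relabel j l) (relabel j r)

/-- The label of the Best-of-Three leaf. -/
def botLabel (t : LTree) : ℕ := (botCut t).2

/-- Best-of-three erasure, including the increasing relabeling. -/
def botErase (t : LTree) : LTree := relabel (botCut t).2 (botCut t).1

/-- Positions (in the original coordinates of `t`) of the branching nodes cut by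
`k` successive best-of-three erasures, in order of erasure. -/
def eraseList : ℕ → LTree → List (List Bool)
  | 0, _ => []
  | k + 1, t => botPos t :: eraseList k (botErase t)

/-- The fringe subtree at a position (`false` = left child, `true` = right child). -/
def subAt : LTree → List Bool → Option LTree
  | t, [] => some t
  | leaf _, _ :: _ => none
  | node l _, false :: p => subAt l p
  | node _ r, true :: p => subAt r p

/-- Shift labels `≥ j` up by one, freeing the label `j`. -/
def relabelUp (j : ℕ) : LTree → LTree
  | leaf a => leaf (if a < j then a else a + 1)
  | node l r => node (relabelUp j l) (relabelUp j r)

/-- Graft a new leaf labeled `j` to the left (`side = false`) or right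
(`side = true`) of the leaf labeled `w`. -/
def graft (w j : ℕ) (side : Bool) : LTree → LTree
  | leaf a =>
    if a = w then (if side then node (leaf a) (leaf j) else node (leaf j) (leaf a))
    else leaf a
  | node l r => node (graft w j side l) (graft w j side r)

/-- The binary tree obtained from the `ℓ`-span (the unary–binary subtree spanned by
the root and the leaves labeled `1,…,ℓ`) by contracting its degree-2 vertices. -/
def trim (ℓ : ℕ) : LTree → LTree
  | leaf a => leaf a
  | node l r =>
    if (labs l).all (fun x => decide (ℓ < x)) then trim ℓ r
    else if (labs r).all (fun x => decide (ℓ < x)) then trim ℓ l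
    else node (trim ℓ l) (trim ℓ r)

/-- Map a position in `trim ℓ t` back to the corresponding position in `t`. -/
def trimPos (ℓ : ℕ) : LTree → List Bool → List Bool
  | leaf _, p => p
  | node l r, p =>
    if (labs l).all (fun x => decide (ℓ < x)) then true :: trimPos ℓ r p
    else if (labs r).all (fun x => decide (ℓ < x)) then false :: trimPos ℓ l p
    else
      match p with
      | [] => []
      | true :: q => true :: trimPos ℓ r q
      | false :: q => false :: trimPos ℓ l q

end LTree

/-!
Let `c` be the number of labels `< j` in a fringe subtree of `T = relabelUp j t'`. After
grafting `j` below a leaf of that subtree, `j` is among its three smallest labels iff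
`c ≤ 2`. So while `c ≥ 3` the best-of-three descent in the grafted tree takes the same
turns as in `T`; while `c = 2` with both labels `< j` on one side it follows them; at the
first node where they are split it turns towards `j`. Below that node `c = 1`, and the
descent ends at the new cherry (with `j` as the larger label) exactly when `j` was grafted
next to the unique label `< j` there. Every other graft sends the descent away from `j`,
or into a subtree whose labels all exceed `j`, and then the erased label is not `j`.
-/

namespace LTree
open List

section Rank

variable {M : List ℕ} {j x y : ℕ}

lemma rank_cons (a : ℕ) (M : List ℕ) (x : ℕ) :
    rank (a :: M) x = rank M x + if a < x then 1 else 0 := by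
  simp [rank, countP_cons]

lemma rank_append (L R : List ℕ) (x : ℕ) : rank (L ++ R) x = rank L x + rank R x :=
  countP_append

lemma rank_perm {M M' : List ℕ} (h : M ~ M') (x : ℕ) : rank M x = rank M' x :=
  h.countP_eq _

lemma rank_mono (M : List ℕ) (h : x ≤ y) : rank M x ≤ rank M y :=
  countP_mono_left fun z _ hz => by simp only [decide_eq_true_eq] at hz ⊢; omega

lemma rank_lt_rank (hx : x ∈ M) (h : x < y) : rank M x < rank M y := by
  have hM := perm_cons_erase hx
  rw [rank_perm hM, rank_perm hM, rank_cons, rank_cons, if_neg (lt_irrefl x), if_pos h]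
  have := rank_mono (M.erase x) h.le
  omega

lemma rank_cons_self (j : ℕ) (M : List ℕ) : rank (j :: M) j = rank M j := by
  simp [rank_cons]

lemma rank_cons_le_of_le (M : List ℕ) (h : x ≤ j) : rank (j :: M) x ≤ rank M j := by
  rw [rank_cons, if_neg (by omega)]
  exact rank_mono M h

lemma rank_lt_rank_cons_of_lt (M : List ℕ) (h : j < x) : rank M j < rank (j :: M) x := by
  rw [rank_cons, if_pos h]
  have := rank_mono M h.le
  omega

lemma le_countP_rank_lt : ∀ (m : ℕ) {M : List ℕ}, M.Nodup → m ≤ M.length →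
    m ≤ M.countP (fun x => rank M x < m)
  | 0, _, _, _ => Nat.zero_le _
  | m + 1, M, hM, hm => by
    have hne : M ≠ [] := by rintro rfl; simp at hm
    set a := M.min hne
    have ha : a ∈ M := min_mem hne
    have hperm := perm_cons_erase ha
    have hrank : ∀ x ∈ M.erase a, rank M x = rank (M.erase a) x + 1 := by
      intro x hx
      obtain ⟨hxa, hxM⟩ := hM.mem_erase_iff.mp hx
      rw [rank_perm hperm, rank_cons, if_pos (lt_of_le_of_ne (min_le_of_mem hxM) (Ne.symm hxa))]
    have hra : rank M a = 0 := by
      rw [rank, countP_eq_zero]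
      intro x hx
      simpa using min_le_of_mem hx
    have ih := le_countP_rank_lt m (hM.erase a)
      (by rw [length_erase_of_mem ha]; omega)
    have hcount : (M.erase a).countP (fun x => rank M x < m + 1) =
        (M.erase a).countP (fun x => rank (M.erase a) x < m) :=
      countP_congr fun x hx => by simp [hrank x hx]
    rw [hperm.countP_eq, countP_cons, hcount, hra]
    simp only [Nat.zero_lt_succ, decide_true, if_true]
    omega

lemma countP_le_one_of_eq {p : ℕ → Bool} : ∀ {L : List ℕ}, L.Nodup →
    (∀ x ∈ L, ∀ y ∈ L, p x → p y → x = y) → L.countP p ≤ 1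
  | [], _, _ => by simp
  | a :: L, hL, h => by
    rw [countP_cons]
    have ih := countP_le_one_of_eq (nodup_cons.mp hL).2
      fun x hx y hy => h x (mem_cons_of_mem a hx) y (mem_cons_of_mem a hy)
    split
    · have : L.countP p = 0 := countP_eq_zero.mpr fun x hx hpx =>
        (nodup_cons.mp hL).1 (h x (mem_cons_of_mem a hx) a mem_cons_self hpx ‹_› ▸ hx)
      omega
    · omega

end Rank

section Graft

variable {j w : ℕ} {s : Bool} {l r t : LTree}

lemma graft_of_not_mem : ∀ {t : LTree}, w ∉ labs t → graft w j s t = t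
  | leaf a, h => by
    simp only [labs, mem_singleton] at h
    simp [graft, Ne.symm h]
  | node l r, h => by
    simp only [labs, mem_append, not_or] at h
    rw [graft, graft_of_not_mem h.1, graft_of_not_mem h.2]

lemma graft_ne_leaf (hw : w ∈ labs t) (a : ℕ) : graft w j s t ≠ leaf a := by
  cases t with
  | leaf b =>
    simp only [labs, mem_singleton] at hw
    cases s <;> simp [graft, hw]
  | node => simp [graft]

lemma labs_graft : ∀ {t : LTree}, w ∈ labs t → (labs t).Nodup →
    labs (graft w j s t) ~ j :: labs t
  | leaf a, hw, _ => by
    simp only [labs, mem_singleton] at hw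
    subst hw
    cases s
    · simp [graft, labs]
    · simpa [graft, labs] using Perm.swap j w []
  | node l r, hw, hnd => by
    rw [labs, nodup_append] at hnd
    simp only [labs, mem_append] at hw
    rcases hw with hw | hw
    · rw [graft, graft_of_not_mem fun hr => hnd.2.2 w hw w hr rfl, labs]
      exact (labs_graft hw hnd.1).append_right _
    · rw [graft, graft_of_not_mem fun hl => hnd.2.2 w hl w hw rfl, labs]
      exact ((labs_graft hw hnd.2.1).append_left _).trans perm_middle

lemma botCut_node (h : ¬ ∃ a b, l = leaf a ∧ r = leaf b) :
    botCut (node l r) = if goLeft l r then (node (botCut l).1 r, (botCut l).2)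
      else (node l (botCut r).1, (botCut r).2) := by
  rcases l with a | ⟨x, y⟩ <;> rcases r with b | ⟨x', y'⟩
  · exact absurd ⟨a, b, rfl, rfl⟩ h
  all_goals rfl

lemma botCut_snd_eq_zero_or_mem : ∀ t : LTree, (botCut t).2 = 0 ∨ (botCut t).2 ∈ labs t
  | leaf _ => Or.inl rfl
  | node l r => by
    by_cases hleaf : ∃ a b, l = leaf a ∧ r = leaf b
    · obtain ⟨a, b, rfl, rfl⟩ := hleaf
      rcases max_choice a b with h | h <;> simp [botCut, labs, h]
    · rw [botCut_node hleaf]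
      split
      · exact (botCut_snd_eq_zero_or_mem l).imp_right (mem_append_left _)
      · exact (botCut_snd_eq_zero_or_mem r).imp_right (mem_append_right _)

lemma botCut_snd_ne (hj0 : j ≠ 0) (hj : j ∉ labs t) : (botCut t).2 ≠ j := by
  rcases botCut_snd_eq_zero_or_mem t with h | h
  · exact h ▸ Ne.symm hj0
  · exact fun h' => hj (h' ▸ h)

lemma botCut_graft_node_left (hw : w ∈ labs l) (hwr : w ∉ labs r) :
    botCut (graft w j s (node l r)) =
      if goLeft (graft w j s l) r then
        (node (botCut (graft w j s l)).1 r, (botCut (graft w j s l)).2)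
      else (node (graft w j s l) (botCut r).1, (botCut r).2) := by
  rw [graft, graft_of_not_mem hwr, botCut_node]
  rintro ⟨a, -, h, -⟩
  exact graft_ne_leaf hw a h

lemma botCut_graft_node_right (hw : w ∈ labs r) (hwl : w ∉ labs l) :
    botCut (graft w j s (node l r)) =
      if goLeft l (graft w j s r) then
        (node (botCut l).1 (graft w j s r), (botCut l).2)
      else (node l (botCut (graft w j s r)).1, (botCut (graft w j s r)).2) := by
  rw [graft, graft_of_not_mem hwl, botCut_node]
  rintro ⟨-, b, -, h⟩
  exact graft_ne_leaf hw b h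

lemma goLeft_graft_left (hw : w ∈ labs l) (hl : (labs l).Nodup) :
    goLeft (graft w j s l) r =
      decide (2 ≤ (j :: labs l).countP fun x => rank (j :: (labs l ++ labs r)) x < 3) := by
  have hp : labs (graft w j s l) ~ j :: labs l := labs_graft hw hl
  simp only [goLeft, rank_perm (hp.append_right (labs r)), cons_append]
  rw [hp.countP_eq]

lemma goLeft_graft_right (hw : w ∈ labs r) (hr : (labs r).Nodup) :
    goLeft l (graft w j s r) =
      decide (2 ≤ (labs l).countP fun x => rank (j :: (labs l ++ labs r)) x < 3) := by
  have hp : labs l ++ labs (graft w j s r) ~ j :: (labs l ++ labs r) :=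
    ((labs_graft hw hr).append_left _).trans perm_middle
  simp only [goLeft, rank_perm hp]

end Graft

section Decisions

variable {j w : ℕ} {s : Bool} {l r : LTree} {M : List ℕ} {x : ℕ}

lemma rank_cons_lt_three_iff_of_three_le (h : 3 ≤ rank M j) (x : ℕ) :
    rank (j :: M) x < 3 ↔ rank M x < 3 := by
  rw [rank_cons]
  split_ifs with hjx
  · have := rank_mono M hjx.le
    omega
  · simp

lemma rank_cons_lt_three_iff_of_eq_two (h : rank M j = 2) (hx : x ≠ j) :
    rank (j :: M) x < 3 ↔ x < j := by
  constructor
  · intro hx3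
    by_contra hxj
    have := rank_lt_rank_cons_of_lt M (lt_of_le_of_ne (not_lt.mp hxj) (Ne.symm hx))
    omega
  · intro hxj
    have := rank_cons_le_of_le M hxj.le
    omega

lemma lt_of_rank_eq_zero {L : List ℕ} (h : rank L j = 0) (hj : j ∉ L) (hx : x ∈ L) :
    j < x := by
  have hxj : ¬ x < j := by simpa using countP_eq_zero.mp h x hx
  exact lt_of_le_of_ne (not_lt.mp hxj) fun hjx => hj (hjx ▸ hx)

lemma goLeft_graft_left_of_three_le (h : 3 ≤ rank (labs l ++ labs r) j)
    (hw : w ∈ labs l) (hl : (labs l).Nodup) : goLeft (graft w j s l) r = goLeft l r := by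
  rw [goLeft_graft_left hw hl, countP_cons]
  simp only [rank_cons_lt_three_iff_of_three_le h]
  simp [goLeft, show ¬ rank (labs l ++ labs r) j < 3 by omega]

lemma goLeft_graft_right_of_three_le (h : 3 ≤ rank (labs l ++ labs r) j)
    (hw : w ∈ labs r) (hr : (labs r).Nodup) : goLeft l (graft w j s r) = goLeft l r := by
  rw [goLeft_graft_right hw hr]
  simp only [rank_cons_lt_three_iff_of_three_le h, goLeft]

lemma two_le_rank_left_of_goLeft (h : 3 ≤ rank (labs l ++ labs r) j) (hgo : goLeft l r = true) :
    2 ≤ rank (labs l) j := by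
  simp only [goLeft, decide_eq_true_eq] at hgo
  refine hgo.trans (countP_mono_left fun x _ hx => ?_)
  simp only [decide_eq_true_eq] at hx ⊢
  by_contra hxj
  have := rank_mono (labs l ++ labs r) (not_lt.mp hxj)
  omega

/-- Among the three smallest labels of the node at most one lies in `l`, so two lie in `r`. -/
lemma two_le_rank_right_of_goLeft_eq_false (hnd : (labs l ++ labs r).Nodup)
    (h : 3 ≤ rank (labs l ++ labs r) j) (hgo : goLeft l r = false) : 2 ≤ rank (labs r) j := by
  simp only [goLeft, decide_eq_false_iff_not, not_le] at hgo
  have hlen : 3 ≤ (labs l ++ labs r).length := h.trans (countP_le_length)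
  have hsmall := le_countP_rank_lt 3 hnd hlen
  have hr : (labs r).countP (fun x => rank (labs l ++ labs r) x < 3) ≤ rank (labs r) j :=
    countP_mono_left fun x _ hx => by
      simp only [decide_eq_true_eq] at hx ⊢
      by_contra hxj
      have := rank_mono (labs l ++ labs r) (not_lt.mp hxj)
      omega
  rw [countP_append] at hsmall
  omega

lemma countP_rank_cons_lt_three_of_eq_two {L : List ℕ} (h : rank M j = 2) (hj : j ∉ L) :
    L.countP (fun x => rank (j :: M) x < 3) = rank L j :=
  countP_congr fun x hx => by
    simp [rank_cons_lt_three_iff_of_eq_two h fun hxj => hj (hxj ▸ hx)]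

lemma goLeft_graft_left_of_rank_eq_two (h : rank (labs l ++ labs r) j = 2) (hjl : j ∉ labs l)
    (hw : w ∈ labs l) (hl : (labs l).Nodup) :
    goLeft (graft w j s l) r = decide (1 ≤ rank (labs l) j) := by
  rw [goLeft_graft_left hw hl, countP_cons, countP_rank_cons_lt_three_of_eq_two h hjl,
    rank_cons_self, h]
  simp

lemma goLeft_graft_right_of_rank_eq_two (h : rank (labs l ++ labs r) j = 2) (hjl : j ∉ labs l)
    (hw : w ∈ labs r) (hr : (labs r).Nodup) :
    goLeft l (graft w j s r) = decide (2 ≤ rank (labs l) j) := by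
  rw [goLeft_graft_right hw hr, countP_rank_cons_lt_three_of_eq_two h hjl]

lemma goLeft_graft_left_of_rank_eq_one (h : rank (labs l ++ labs r) j = 1)
    (hl1 : 1 ≤ rank (labs l) j) (hw : w ∈ labs l) (hl : (labs l).Nodup) :
    goLeft (graft w j s l) r = true := by
  obtain ⟨a, ha, haj⟩ := countP_pos_iff.mp hl1
  have hsmall : 0 < (labs l).countP fun x => rank (j :: (labs l ++ labs r)) x < 3 :=
    countP_pos_iff.mpr ⟨a, ha, by
      have := rank_cons_le_of_le (labs l ++ labs r) (of_decide_eq_true haj).le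
      simp only [decide_eq_true_eq]
      omega⟩
  rw [goLeft_graft_left hw hl, countP_cons, rank_cons_self, h, if_pos (by decide)]
  simp only [decide_eq_true_eq]
  omega

/-- The labels `< j` and `j` itself have ranks `0` and `1`, so every label of `l` has rank
`≥ 2` and only one of them can be among the three smallest. -/
lemma goLeft_graft_right_of_rank_eq_one (h : rank (labs l ++ labs r) j = 1)
    (hL : ∀ x ∈ labs l, j < x) (hl : (labs l).Nodup) (hw : w ∈ labs r) (hr : (labs r).Nodup) :
    goLeft l (graft w j s r) = false := by
  have hge : ∀ x ∈ labs l, 2 ≤ rank (j :: (labs l ++ labs r)) x := fun x hx => by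
    have := rank_lt_rank_cons_of_lt (labs l ++ labs r) (hL x hx)
    omega
  have hmem : ∀ x ∈ labs l, x ∈ j :: (labs l ++ labs r) := fun x hx =>
    mem_cons_of_mem _ (mem_append_left _ hx)
  have hle : (labs l).countP (fun x => rank (j :: (labs l ++ labs r)) x < 3) ≤ 1 := by
    refine countP_le_one_of_eq hl fun x hx y hy hx3 hy3 => ?_
    simp only [decide_eq_true_eq] at hx3 hy3
    by_contra hxy
    rcases lt_or_gt_of_ne hxy with hlt | hlt
    · have := rank_lt_rank (hmem x hx) hlt
      have := hge x hx
      omega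
    · have := rank_lt_rank (hmem y hy) hlt
      have := hge y hy
      omega
  rw [goLeft_graft_right hw hr, decide_eq_false_iff_not]
  omega

end Decisions

def GraftRecovers (j : ℕ) (t : LTree) (w : ℕ) : Prop :=
  ∀ s, botCut (graft w j s t) = (t, j)

def GraftMisses (j : ℕ) (t : LTree) (w : ℕ) : Prop :=
  ∀ s, (botCut (graft w j s t)).2 ≠ j

def HasTwoGraftSites (j : ℕ) (t : LTree) : Prop :=
  ∃ v v', v ≠ v' ∧ v ∈ labs t ∧ v' ∈ labs t ∧
    GraftRecovers j t v ∧ GraftRecovers j t v' ∧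
    ∀ w ∈ labs t, w ≠ v → w ≠ v' → GraftMisses j t w

section Node

variable {j w : ℕ} {l r : LTree}

lemma GraftRecovers.node_left (hnd : (labs l ++ labs r).Nodup) (hw : w ∈ labs l)
    (hgo : ∀ s, goLeft (graft w j s l) r = true) (h : GraftRecovers j l w) :
    GraftRecovers j (node l r) w := fun s => by
  rw [botCut_graft_node_left hw (disjoint_of_nodup_append hnd hw), if_pos (hgo s), h s]

lemma GraftRecovers.node_right (hnd : (labs l ++ labs r).Nodup) (hw : w ∈ labs r)
    (hgo : ∀ s, goLeft l (graft w j s r) = false) (h : GraftRecovers j r w) :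
    GraftRecovers j (node l r) w := fun s => by
  rw [botCut_graft_node_right hw fun hl => disjoint_of_nodup_append hnd hl hw,
    if_neg (by simp [hgo s]), h s]

lemma GraftMisses.node_left (hnd : (labs l ++ labs r).Nodup) (hj0 : j ≠ 0) (hjr : j ∉ labs r)
    (hw : w ∈ labs l) (h : GraftMisses j l w) : GraftMisses j (node l r) w := fun s => by
  rw [botCut_graft_node_left hw (disjoint_of_nodup_append hnd hw)]
  split
  · exact h s
  · exact botCut_snd_ne hj0 hjr

lemma GraftMisses.node_right (hnd : (labs l ++ labs r).Nodup) (hj0 : j ≠ 0) (hjl : j ∉ labs l)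
    (hw : w ∈ labs r) (h : GraftMisses j r w) : GraftMisses j (node l r) w := fun s => by
  rw [botCut_graft_node_right hw fun hl => disjoint_of_nodup_append hnd hl hw]
  split
  · exact botCut_snd_ne hj0 hjl
  · exact h s

lemma graftMisses_node_left_of_goLeft_eq_false (hnd : (labs l ++ labs r).Nodup) (hj0 : j ≠ 0)
    (hjr : j ∉ labs r) (hw : w ∈ labs l) (hgo : ∀ s, goLeft (graft w j s l) r = false) :
    GraftMisses j (node l r) w := fun s => by
  rw [botCut_graft_node_left hw (disjoint_of_nodup_append hnd hw), if_neg (by simp [hgo s])]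
  exact botCut_snd_ne hj0 hjr

lemma graftMisses_node_right_of_goLeft (hnd : (labs l ++ labs r).Nodup) (hj0 : j ≠ 0)
    (hjl : j ∉ labs l) (hw : w ∈ labs r) (hgo : ∀ s, goLeft l (graft w j s r) = true) :
    GraftMisses j (node l r) w := fun s => by
  rw [botCut_graft_node_right hw (fun hl => disjoint_of_nodup_append hnd hl hw), if_pos (hgo s)]
  exact botCut_snd_ne hj0 hjl

lemma HasTwoGraftSites.node_left (hnd : (labs l ++ labs r).Nodup) (hj0 : j ≠ 0)
    (hjl : j ∉ labs l) (hjr : j ∉ labs r)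
    (hgoL : ∀ w ∈ labs l, ∀ s, goLeft (graft w j s l) r = true)
    (hgoR : ∀ w ∈ labs r, ∀ s, goLeft l (graft w j s r) = true)
    (h : HasTwoGraftSites j l) : HasTwoGraftSites j (node l r) := by
  obtain ⟨v, v', hvv', hv, hv', hrv, hrv', hmiss⟩ := h
  refine ⟨v, v', hvv', mem_append_left _ hv, mem_append_left _ hv',
    hrv.node_left hnd hv (hgoL v hv), hrv'.node_left hnd hv' (hgoL v' hv'), ?_⟩
  intro w hw hwv hwv'
  rcases mem_append.mp hw with hw | hw
  · exact (hmiss w hw hwv hwv').node_left hnd hj0 hjr hw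
  · exact graftMisses_node_right_of_goLeft hnd hj0 hjl hw (hgoR w hw)

lemma HasTwoGraftSites.node_right (hnd : (labs l ++ labs r).Nodup) (hj0 : j ≠ 0)
    (hjl : j ∉ labs l) (hjr : j ∉ labs r)
    (hgoL : ∀ w ∈ labs l, ∀ s, goLeft (graft w j s l) r = false)
    (hgoR : ∀ w ∈ labs r, ∀ s, goLeft l (graft w j s r) = false)
    (h : HasTwoGraftSites j r) : HasTwoGraftSites j (node l r) := by
  obtain ⟨v, v', hvv', hv, hv', hrv, hrv', hmiss⟩ := h
  refine ⟨v, v', hvv', mem_append_right _ hv, mem_append_right _ hv',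
    hrv.node_right hnd hv (hgoR v hv), hrv'.node_right hnd hv' (hgoR v' hv'), ?_⟩
  intro w hw hwv hwv'
  rcases mem_append.mp hw with hw | hw
  · exact graftMisses_node_left_of_goLeft_eq_false hnd hj0 hjr hw (hgoL w hw)
  · exact (hmiss w hw hwv hwv').node_right hnd hj0 hjl hw

end Node

section Sites

variable {j : ℕ} {l r : LTree}

lemma graftMisses_of_forall_lt (hj0 : j ≠ 0) : ∀ {t : LTree}, (labs t).Nodup →
    (∀ x ∈ labs t, j < x) → ∀ w ∈ labs t, GraftMisses j t w
  | leaf a, _, h, w, hw => fun s => by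
    simp only [labs, mem_singleton, forall_eq] at h hw
    subst hw
    cases s <;> simp [graft, botCut] <;> omega
  | node l r, hnd, h, w, hw => by
    rw [labs] at hnd h hw
    have hjl : j ∉ labs l := fun hj => lt_irrefl j (h j (mem_append_left _ hj))
    have hjr : j ∉ labs r := fun hj => lt_irrefl j (h j (mem_append_right _ hj))
    rcases mem_append.mp hw with hw | hw
    · exact (graftMisses_of_forall_lt hj0 hnd.of_append_left
        (fun x hx => h x (mem_append_left _ hx)) w hw).node_left hnd hj0 hjr hw
    · exact (graftMisses_of_forall_lt hj0 hnd.of_append_right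
        (fun x hx => h x (mem_append_right _ hx)) w hw).node_right hnd hj0 hjl hw

lemma exists_graftRecovers_of_rank_eq_one : ∀ {t : LTree}, (labs t).Nodup → j ∉ labs t →
    rank (labs t) j = 1 →
    ∃ a ∈ labs t, GraftRecovers j t a ∧ ∀ w ∈ labs t, w ≠ a → GraftMisses j t w
  | leaf b, _, _, h => by
    have hb : b < j := by simpa [rank, labs] using h
    refine ⟨b, mem_singleton_self b, fun s => ?_, by simp [labs]⟩
    cases s <;> simp [graft, botCut, hb.le]
  | node l r, hnd, hj, h => by
    rw [labs] at hnd hj h ⊢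
    rw [rank_append] at h
    have hjl : j ∉ labs l := fun hj' => hj (mem_append_left _ hj')
    have hjr : j ∉ labs r := fun hj' => hj (mem_append_right _ hj')
    have hj0 : j ≠ 0 := by
      rintro rfl
      simp [rank] at h
    have hnl := hnd.of_append_left
    have hnr := hnd.of_append_right
    rcases Nat.eq_zero_or_pos (rank (labs r) j) with hr0 | hr1
    · obtain ⟨a, ha, hrec, hmiss⟩ :=
        exists_graftRecovers_of_rank_eq_one hnl hjl (by omega)
      have hR : ∀ x ∈ labs r, j < x := fun x hx => lt_of_rank_eq_zero hr0 hjr hx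
      refine ⟨a, mem_append_left _ ha, hrec.node_left hnd ha
        (fun s => goLeft_graft_left_of_rank_eq_one (by rw [rank_append]; omega) (by omega) ha hnl),
        fun w hw hwa => ?_⟩
      rcases mem_append.mp hw with hw | hw
      · exact (hmiss w hw hwa).node_left hnd hj0 hjr hw
      · exact (graftMisses_of_forall_lt hj0 hnr hR w hw).node_right hnd hj0 hjl hw
    · obtain ⟨a, ha, hrec, hmiss⟩ :=
        exists_graftRecovers_of_rank_eq_one hnr hjr (by omega)
      have hL : ∀ x ∈ labs l, j < x := fun x hx => lt_of_rank_eq_zero (by omega) hjl hx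
      refine ⟨a, mem_append_right _ ha, hrec.node_right hnd ha
        (fun s => goLeft_graft_right_of_rank_eq_one (by rw [rank_append]; omega) hL hnl ha hnr),
        fun w hw hwa => ?_⟩
      rcases mem_append.mp hw with hw | hw
      · exact (graftMisses_of_forall_lt hj0 hnl hL w hw).node_left hnd hj0 hjr hw
      · exact (hmiss w hw hwa).node_right hnd hj0 hjl hw

lemma hasTwoGraftSites_node_of_rank_eq_one (hnd : (labs l ++ labs r).Nodup)
    (hjl : j ∉ labs l) (hjr : j ∉ labs r)
    (hl : rank (labs l) j = 1) (hr : rank (labs r) j = 1) : HasTwoGraftSites j (node l r) := by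
  have hnl := hnd.of_append_left
  have hnr := hnd.of_append_right
  have h2 : rank (labs l ++ labs r) j = 2 := by rw [rank_append]; omega
  have hj0 : j ≠ 0 := by
    rintro rfl
    simp [rank] at hl
  obtain ⟨a, ha, hra, hma⟩ := exists_graftRecovers_of_rank_eq_one hnl hjl hl
  obtain ⟨b, hb, hrb, hmb⟩ := exists_graftRecovers_of_rank_eq_one hnr hjr hr
  refine ⟨a, b, fun hab => disjoint_of_nodup_append hnd ha (hab ▸ hb),
    mem_append_left _ ha, mem_append_right _ hb,
    hra.node_left hnd ha fun s => by rw [goLeft_graft_left_of_rank_eq_two h2 hjl ha hnl, hl]; rfl,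
    hrb.node_right hnd hb fun s => by rw [goLeft_graft_right_of_rank_eq_two h2 hjl hb hnr, hl]; rfl,
    fun w hw hwa hwb => ?_⟩
  rcases mem_append.mp hw with hw | hw
  · exact (hma w hw hwa).node_left hnd hj0 hjr hw
  · exact (hmb w hw hwb).node_right hnd hj0 hjl hw

theorem hasTwoGraftSites : ∀ {t : LTree}, (labs t).Nodup → j ∉ labs t →
    2 ≤ rank (labs t) j → HasTwoGraftSites j t
  | leaf b, _, _, h => by
    have : rank [b] j ≤ 1 := countP_le_length
    simp only [labs] at h
    omega
  | node l r, hnd, hj, h => by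
    rw [labs] at hnd hj h
    have hjl : j ∉ labs l := fun hj' => hj (mem_append_left _ hj')
    have hjr : j ∉ labs r := fun hj' => hj (mem_append_right _ hj')
    have hnl := hnd.of_append_left
    have hnr := hnd.of_append_right
    have hj0 : j ≠ 0 := by
      rintro rfl
      simp [rank] at h
    have hsum := rank_append (labs l) (labs r) j
    by_cases h3 : 3 ≤ rank (labs l ++ labs r) j
    · cases hgo : goLeft l r
      · refine .node_right hnd hj0 hjl hjr
          (fun w hw s => by rw [goLeft_graft_left_of_three_le h3 hw hnl, hgo])
          (fun w hw s => by rw [goLeft_graft_right_of_three_le h3 hw hnr, hgo])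
          (hasTwoGraftSites hnr hjr (two_le_rank_right_of_goLeft_eq_false hnd h3 hgo))
      · refine .node_left hnd hj0 hjl hjr
          (fun w hw s => by rw [goLeft_graft_left_of_three_le h3 hw hnl, hgo])
          (fun w hw s => by rw [goLeft_graft_right_of_three_le h3 hw hnr, hgo])
          (hasTwoGraftSites hnl hjl (two_le_rank_left_of_goLeft h3 hgo))
    have h2 : rank (labs l ++ labs r) j = 2 := by omega
    rcases (by omega : rank (labs l) j = 0 ∨ rank (labs l) j = 1 ∨ rank (labs l) j = 2)
      with hl | hl | hl
    · refine .node_right hnd hj0 hjl hjr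
        (fun w hw s => by rw [goLeft_graft_left_of_rank_eq_two h2 hjl hw hnl, hl]; rfl)
        (fun w hw s => by rw [goLeft_graft_right_of_rank_eq_two h2 hjl hw hnr, hl]; rfl)
        (hasTwoGraftSites hnr hjr (by omega))
    · exact hasTwoGraftSites_node_of_rank_eq_one hnd hjl hjr hl (by omega)
    · refine .node_left hnd hj0 hjl hjr
        (fun w hw s => by rw [goLeft_graft_left_of_rank_eq_two h2 hjl hw hnl, hl]; rfl)
        (fun w hw s => by rw [goLeft_graft_right_of_rank_eq_two h2 hjl hw hnr, hl]; rfl)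
        (hasTwoGraftSites hnl hjl (by omega))

end Sites

lemma IsLab.nodup {n : ℕ} {t : LTree} (h : IsLab n t) : (labs t).Nodup :=
  h.2.nodup_iff.mpr (nodup_range.map (add_left_injective 1))

lemma IsLab.mem_labs {n a : ℕ} {t : LTree} (h : IsLab n t) (ha : 1 ≤ a) (ha' : a ≤ n + 1) :
    a ∈ labs t :=
  h.2.mem_iff.mpr (mem_map.mpr ⟨a - 1, mem_range.mpr (by omega), by omega⟩)

section Relabel

variable {j : ℕ}

lemma labs_relabelUp : ∀ t : LTree,
    labs (relabelUp j t) = (labs t).map fun a => if a < j then a else a + 1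
  | leaf _ => rfl
  | node l r => by simp [relabelUp, labs, labs_relabelUp l, labs_relabelUp r]

lemma nodup_labs_relabelUp {t : LTree} (h : (labs t).Nodup) : (labs (relabelUp j t)).Nodup := by
  rw [labs_relabelUp]
  refine h.map fun a b hab => ?_
  split_ifs at hab <;> omega

lemma not_mem_labs_relabelUp (t : LTree) : j ∉ labs (relabelUp j t) := by
  rw [labs_relabelUp, mem_map]
  rintro ⟨a, -, ha⟩
  split_ifs at ha <;> omega

lemma mem_labs_relabelUp_of_lt {t : LTree} {a : ℕ} (ha : a ∈ labs t) (haj : a < j) :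
    a ∈ labs (relabelUp j t) := by
  rw [labs_relabelUp]
  exact mem_map.mpr ⟨a, ha, if_pos haj⟩

lemma relabel_relabelUp : ∀ t : LTree, relabel j (relabelUp j t) = t
  | leaf a => by
    by_cases h : a < j
    · simp [relabelUp, relabel, h]
    · simp [relabelUp, relabel, h, show ¬ a + 1 < j by omega]
  | node l r => by simp [relabelUp, relabel, relabel_relabelUp l, relabel_relabelUp r]

lemma IsLab.two_le_rank_labs_relabelUp {m : ℕ} {t : LTree} (h : IsLab m t) (hm : 1 ≤ m)
    (hj : 3 ≤ j) : 2 ≤ rank (labs (relabelUp j t)) j := by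
  have h1 := mem_labs_relabelUp_of_lt (j := j) (h.mem_labs le_rfl (by omega)) (by omega)
  have h2 := mem_labs_relabelUp_of_lt (j := j) (h.mem_labs one_le_two (by omega)) (by omega)
  have := rank_lt_rank h1 one_lt_two
  have := rank_lt_rank h2 (by omega : 2 < j)
  omega

lemma GraftRecovers.botErase_botLabel {t : LTree} {w : ℕ}
    (h : GraftRecovers j (relabelUp j t) w) (s : Bool) :
    botErase (graft w j s (relabelUp j t)) = t ∧ botLabel (graft w j s (relabelUp j t)) = j := by
  simp [botErase, botLabel, h s, relabel_relabelUp]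

end Relabel

end LTree

theorem four_grafting_positions_general (n j : ℕ) (hn : 2 ≤ n) (hj : 3 ≤ j)
    (t' : LTree) (h : LTree.IsLab (n - 1) t') :
    ∃ v v' : ℕ, v ≠ v' ∧
      {p : ℕ × Bool |
          p.1 ∈ LTree.labs (LTree.relabelUp j t') ∧
          LTree.botErase (LTree.graft p.1 j p.2 (LTree.relabelUp j t')) = t' ∧
          LTree.botLabel (LTree.graft p.1 j p.2 (LTree.relabelUp j t')) = j} =
        {(v, false), (v, true), (v', false), (v', true)} := by
  obtain ⟨v, v', hvv', hv, hv', hrv, hrv', hmiss⟩ :=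
    LTree.hasTwoGraftSites (LTree.nodup_labs_relabelUp h.nodup)
      (LTree.not_mem_labs_relabelUp t') (h.two_le_rank_labs_relabelUp (by omega) hj)
  refine ⟨v, v', hvv', Set.ext fun ⟨w, s⟩ =>
    ⟨fun ⟨hw, _, hlab⟩ => ?_, fun hws => ?_⟩⟩
  · by_contra hne
    simp only [Set.mem_insert_iff, Set.mem_singleton_iff, Prod.mk.injEq] at hne
    exact hmiss w hw (by cases s <;> tauto) (by cases s <;> tauto) s hlab
  · simp only [Set.mem_insert_iff, Set.mem_singleton_iff, Prod.mk.injEq] at hws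
    rcases hws with ⟨rfl, -⟩ | ⟨rfl, -⟩ | ⟨rfl, -⟩ | ⟨rfl, -⟩
    exacts [⟨hv, hrv.botErase_botLabel s⟩, ⟨hv, hrv.botErase_botLabel s⟩,
      ⟨hv', hrv'.botErase_botLabel s⟩, ⟨hv', hrv'.botErase_botLabel s⟩]

/-- If `j ∈ {3,…,n+1}` is the label of the BoT leaf erased from a
labeled binary tree of size `n` producing a labeled tree `t'` of size `n − 1`,
then there are exactly `4` grafting positions in `t'` (relabeled increasingly by
`{1,…,n+1} \ {j}` via `relabelUp j`) where inserting a new leaf labeled `j`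
yields a tree whose best-of-three erasure is `t'` with BoT label `j`: namely the
left and the right of each of two distinct leaves `v`, `v'`. -/
theorem four_grafting_positions (n j : ℕ) (hn : 2 ≤ n) (hj : 3 ≤ j)
    (hj' : j ≤ n + 1) (t' : LTree) (h : LTree.IsLab (n - 1) t') :
    ∃ v v' : ℕ, v ≠ v' ∧
      {p : ℕ × Bool |
          p.1 ∈ LTree.labs (LTree.relabelUp j t') ∧
          LTree.botErase (LTree.graft p.1 j p.2 (LTree.relabelUp j t')) = t' ∧
          LTree.botLabel (LTree.graft p.1 j p.2 (LTree.relabelUp j t')) = j} =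
        {(v, false), (v, true), (v', false), (v', true)} :=
  four_grafting_positions_general n j hn hj t' h
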